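/- arXiv:2312.09209 — 2 statements merged into one kernel-verified Lean document; each statement's English description precedes it below -/
import Mathlib

section
/- The product over all nine cells of a 3×3 magic square of observables computed row-wise equals +I, while computed column-wise it equals -I, yielding a contradiction for any classical {-1,1}-valued assignment consistent with the operator identities. Concretely: for the 2-qubit Pauli operators M(1,1)=X⊗I, M(1,2)=I⊗X, M(1,3)=X⊗X, M(2,1)=I⊗Z, M(2,2)=Z⊗I, M(2,3)=Z⊗Z, M(3,1)=-X⊗Z, M(3,2)=-Z⊗X, M(3,3)=Y⊗Y, the product of each row is I⊗I and the product of each column is -(I⊗I). -/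
open Kronecker

noncomputable def Xm : Matrix (Fin 2) (Fin 2) ℂ := !![0, 1; 1, 0]
noncomputable def Ym : Matrix (Fin 2) (Fin 2) ℂ := !![0, -Complex.I; Complex.I, 0]
noncomputable def Zm : Matrix (Fin 2) (Fin 2) ℂ := !![1, 0; 0, -1]

/-- The nine two-qubit Pauli observables of the magic square. -/
noncomputable def magicSquare : Fin 3 → Fin 3 → Matrix (Fin 2 × Fin 2) (Fin 2 × Fin 2) ℂ :=
  ![![Xm ⊗ₖ (1 : Matrix (Fin 2) (Fin 2) ℂ), (1 : Matrix (Fin 2) (Fin 2) ℂ) ⊗ₖ Xm, Xm ⊗ₖ Xm],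
    ![(1 : Matrix (Fin 2) (Fin 2) ℂ) ⊗ₖ Zm, Zm ⊗ₖ (1 : Matrix (Fin 2) (Fin 2) ℂ), Zm ⊗ₖ Zm],
    ![-(Xm ⊗ₖ Zm), -(Zm ⊗ₖ Xm), Ym ⊗ₖ Ym]]

lemma XX : Xm * Xm = 1 := by
  simp [Xm, Matrix.mul_fin_two, Matrix.one_fin_two]

lemma ZZ : Zm * Zm = 1 := by
  simp [Zm, Matrix.mul_fin_two, Matrix.one_fin_two]

lemma XZY : Xm * Zm * Ym = (-Complex.I) • 1 := by
  ext i j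
  fin_cases i <;> fin_cases j <;>
    simp [Xm, Zm, Ym, Matrix.mul_fin_two, Matrix.one_fin_two]

lemma ZXY : Zm * Xm * Ym = Complex.I • 1 := by
  ext i j
  fin_cases i <;> fin_cases j <;>
    simp [Xm, Zm, Ym, Matrix.mul_fin_two, Matrix.one_fin_two]

/-- The product of each row of the magic square of observables is the identity,
while the product of each column is minus the identity. -/
theorem magic_square_row_column_products :
    (∀ i : Fin 3, magicSquare i 0 * magicSquare i 1 * magicSquare i 2 = 1) ∧
    (∀ j : Fin 3, magicSquare 0 j * magicSquare 1 j * magicSquare 2 j = -1) := by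
  constructor
  · intro i; fin_cases i
    · show Xm ⊗ₖ (1 : Matrix (Fin 2) (Fin 2) ℂ) * ((1 : Matrix (Fin 2) (Fin 2) ℂ) ⊗ₖ Xm) *
        (Xm ⊗ₖ Xm) = 1
      rw [← Matrix.mul_kronecker_mul, ← Matrix.mul_kronecker_mul]
      simp [XX, Matrix.one_kronecker_one]
    · show (1 : Matrix (Fin 2) (Fin 2) ℂ) ⊗ₖ Zm * (Zm ⊗ₖ (1 : Matrix (Fin 2) (Fin 2) ℂ)) *
        (Zm ⊗ₖ Zm) = 1
      rw [← Matrix.mul_kronecker_mul, ← Matrix.mul_kronecker_mul]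
      simp [ZZ, Matrix.one_kronecker_one]
    · show -(Xm ⊗ₖ Zm) * -(Zm ⊗ₖ Xm) * (Ym ⊗ₖ Ym) = 1
      rw [neg_mul_neg, ← Matrix.mul_kronecker_mul, ← Matrix.mul_kronecker_mul, XZY, ZXY,
        Matrix.smul_kronecker, Matrix.kronecker_smul, smul_smul, Matrix.one_kronecker_one]
      simp [Complex.I_mul_I]
  · intro j; fin_cases j
    · show Xm ⊗ₖ (1 : Matrix (Fin 2) (Fin 2) ℂ) * ((1 : Matrix (Fin 2) (Fin 2) ℂ) ⊗ₖ Zm) *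
        -(Xm ⊗ₖ Zm) = -1
      rw [mul_neg, ← Matrix.mul_kronecker_mul, ← Matrix.mul_kronecker_mul, Matrix.mul_one,
        Matrix.one_mul, XX, ZZ, Matrix.one_kronecker_one]
    · show (1 : Matrix (Fin 2) (Fin 2) ℂ) ⊗ₖ Xm * (Zm ⊗ₖ (1 : Matrix (Fin 2) (Fin 2) ℂ)) *
        -(Zm ⊗ₖ Xm) = -1
      rw [mul_neg, ← Matrix.mul_kronecker_mul, ← Matrix.mul_kronecker_mul, Matrix.mul_one,
        Matrix.one_mul, XX, ZZ, Matrix.one_kronecker_one]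
    · show Xm ⊗ₖ Xm * (Zm ⊗ₖ Zm) * (Ym ⊗ₖ Ym) = -1
      rw [← Matrix.mul_kronecker_mul, ← Matrix.mul_kronecker_mul, XZY,
        Matrix.smul_kronecker, Matrix.kronecker_smul, smul_smul, Matrix.one_kronecker_one]
      simp [Complex.I_mul_I]
end

section
/- For the single-qubit unitaries U₁ = R_X, U₂ = Z·R_Y†, U₃ = R_Z† and V₁ = I, V₂ = R_Z·R_Y†, V₃ = R_X†·R_Y, where R_P = (I - iP)/√2 for P ∈ {X,Y,Z}: for any functions F : {1,2,3} → {I,X,Y,Z} and G : {1,2,3} → {I,X,Y,Z}, there exists at least one pair (α,β) ∈ {1,2,3}² such that tr(U_α F(α) V_β G(β)) = 0. -/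
open Matrix
/-- `R_P = (I - iP)/√2`. -/
noncomputable def Rm (P : Matrix (Fin 2) (Fin 2) ℂ) : Matrix (Fin 2) (Fin 2) ℂ :=
  ((Real.sqrt 2 : ℂ))⁻¹ • (1 - Complex.I • P)

/-- `(U₁, U₂, U₃) = (R_X, Z R_Y†, R_Z†)`. -/
noncomputable def Umat : Fin 3 → Matrix (Fin 2) (Fin 2) ℂ :=
  ![Rm Xm, Zm * (Rm Ym)ᴴ, (Rm Zm)ᴴ]

/-- `(V₁, V₂, V₃) = (I, R_Z R_Y†, R_X† R_Y)`. -/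
noncomputable def Vmat : Fin 3 → Matrix (Fin 2) (Fin 2) ℂ :=
  ![1, Rm Zm * (Rm Ym)ᴴ, (Rm Xm)ᴴ * Rm Ym]
noncomputable def sq2 : ℂ := ((Real.sqrt 2 : ℝ) : ℂ)⁻¹
open Complex in
lemma hU : Umat = ![sq2 • !![1, -I; -I, 1], sq2 • !![1, 1; 1, -1],
    sq2 • !![1+I, 0; 0, 1-I]] := by
  funext i
  fin_cases i <;>
  · ext j k
    fin_cases j <;> fin_cases k <;>
      simp [Umat, Rm, Xm, Ym, Zm, sq2, Matrix.mul_apply, Fin.sum_univ_two,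
        Matrix.conjTranspose_apply, Matrix.smul_apply, Matrix.sub_apply, Matrix.one_apply, Matrix.vecMul, dotProduct, Matrix.vecHead, Matrix.vecTail] <;>
      ring

open Complex in
lemma hV : Vmat = ![1, (sq2 * sq2) • !![1-I, 1-I; -1-I, 1+I],
    (sq2 * sq2) • !![1+I, -1+I; 1+I, 1-I]] := by
  funext i
  fin_cases i
  · rfl
  all_goals
  · ext j k
    fin_cases j <;> fin_cases k <;>
      simp [Vmat, Rm, Xm, Ym, Zm, sq2, Matrix.mul_apply, Fin.sum_univ_two,
        Matrix.conjTranspose_apply, Matrix.smul_apply, Matrix.sub_apply, Matrix.one_apply, Matrix.vecMul, dotProduct, Matrix.vecHead, Matrix.vecTail] <;>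
      ring
noncomputable def pauli : Fin 4 → Matrix (Fin 2) (Fin 2) ℂ := ![1, Xm, Ym, Zm]
def Ttbl : Fin 3 → Fin 3 → Fin 4 → Fin 4 → Bool :=
  ![![![![true,true,false,false], ![true,true,false,false], ![false,false,true,true], ![false,false,true,true]],
     ![![false,true,true,false], ![true,false,false,true], ![false,true,true,false], ![true,false,false,true]],
     ![![true,false,true,false], ![false,true,false,true], ![false,true,false,true], ![true,false,true,false]]],
    ![![![false,true,false,true], ![true,false,true,false], ![false,true,false,true], ![true,false,true,false]],
     ![![true,true,false,false], ![false,false,true,true], ![false,false,true,true], ![true,true,false,false]],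
     ![![true,false,false,true], ![true,false,false,true], ![false,true,true,false], ![false,true,true,false]]],
    ![![![true,false,false,true], ![false,true,true,false], ![false,true,true,false], ![true,false,false,true]],
     ![![true,false,true,false], ![true,false,true,false], ![false,true,false,true], ![false,true,false,true]],
     ![![false,false,true,true], ![true,true,false,false], ![false,false,true,true], ![true,true,false,false]]]]

lemma hI3 : Complex.I ^ 3 = -Complex.I := by
  rw [pow_succ, Complex.I_sq]; ring

set_option maxHeartbeats 1000000 in
lemma key (α β : Fin 3) (p q : Fin 4) (h : Ttbl α β p q = false) :
    Matrix.trace (Umat α * pauli p * Vmat β * pauli q) = 0 := by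
  rw [hU, hV]
  fin_cases α <;> fin_cases β <;> fin_cases p <;> fin_cases q <;>
    first
    | exact absurd h (by decide)
    | (clear h
       simp [pauli, Xm, Ym, Zm, Matrix.smul_mul, Matrix.mul_smul, Matrix.trace_smul,
         Matrix.mul_fin_two, Matrix.trace_fin_two_of, smul_eq_mul] <;>
       ring_nf <;> simp [Complex.I_sq, hI3] <;> ring_nf)

set_option maxHeartbeats 2000000 in
lemma comb0 : ∀ p1 p2 p3 q1 q2 q3 : Fin 4, ∃ α β : Fin 3,
    Ttbl α β (![p1,p2,p3] α) (![q1,q2,q3] β) = false := by decide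

lemma comb (f g : Fin 3 → Fin 4) : ∃ α β : Fin 3, Ttbl α β (f α) (g β) = false := by
  obtain ⟨α, β, hT⟩ := comb0 (f 0) (f 1) (f 2) (g 0) (g 1) (g 2)
  refine ⟨α, β, ?_⟩
  fin_cases α <;> fin_cases β <;> simpa using hT

/-- For any choice of a Pauli for each of Alice's and Bob's three inputs, there
is a pair of inputs `(α, β)` on which the trace `tr(U_α F(α) V_β G(β))` vanishes. -/
theorem exists_vanishing_trace
    (F G : Fin 3 → Matrix (Fin 2) (Fin 2) ℂ)
    (hF : ∀ α, F α ∈ ({1, Xm, Ym, Zm} : Set (Matrix (Fin 2) (Fin 2) ℂ)))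
    (hG : ∀ β, G β ∈ ({1, Xm, Ym, Zm} : Set (Matrix (Fin 2) (Fin 2) ℂ))) :
    ∃ α β : Fin 3, Matrix.trace (Umat α * F α * Vmat β * G β) = 0 := by
  have hF' : ∀ α, ∃ p : Fin 4, F α = pauli p := by
    intro α
    rcases hF α with h | h | h | h
    exacts [⟨0, h⟩, ⟨1, h⟩, ⟨2, h⟩, ⟨3, h⟩]
  have hG' : ∀ β, ∃ q : Fin 4, G β = pauli q := by
    intro β
    rcases hG β with h | h | h | h
    exacts [⟨0, h⟩, ⟨1, h⟩, ⟨2, h⟩, ⟨3, h⟩]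
  choose f hf using hF'
  choose g hg using hG'
  obtain ⟨α, β, hT⟩ := comb f g
  exact ⟨α, β, by rw [hf α, hg β]; exact key α β (f α) (g β) hT⟩
end
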